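/- arXiv:1605.06164 — 4 statements merged into one kernel-verified Lean document; each statement's English description precedes it below -/
import Mathlib

section
/- Every infinite ascending chain S for a linear order ≤_L on ω contains an infinite subset S' ⊆ S that is an ascending sequence for ≤_L (i.e., for all x, y ∈ S', x ≤ y implies x ≤_L y). -/
/-!
Enumerate `S` increasingly and apply Ramsey's theorem for pairs to the colouring "`≤_L`-ascending
or not": an infinite subsequence is either strictly `≤_L`-increasing or has all its later terms
`≤_L`-below its first one. The chain condition rules out the second alternative, and a
subsequence of an increasing enumeration is increasing in the usual order too.
-/

theorem exists_strictMono_subseq_of_finite_le {α : Type*} [LinearOrder α] (f : ℕ → α)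
    (hf : ∀ m, {n | f n ≤ f m}.Finite) : ∃ g : ℕ ↪o ℕ, StrictMono (f ∘ g) := by
  obtain ⟨g, hinc | hninc⟩ := exists_increasing_or_nonincreasing_subseq (· < ·) f
  · exact ⟨g, hinc⟩
  · have hbelow : ∀ k, g k ∈ {n | f n ≤ f (g 0)} := by
      intro k
      rcases k.eq_zero_or_pos with rfl | hk
      · exact le_rfl
      · exact not_lt.mp (hninc 0 k hk)
    exact absurd (hf (g 0)) (Set.infinite_of_injective_forall_mem g.injective hbelow)

theorem Set.Infinite.exists_infinite_subset_monotoneOn {α : Type*} [LinearOrder α] {S : Set ℕ}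
    (hS : S.Infinite) (f : ℕ → α) (hf : ∀ x ∈ S, {y ∈ S | f y ≤ f x}.Finite) :
    ∃ S' ⊆ S, S'.Infinite ∧ MonotoneOn f S' := by
  set e := Nat.nth (· ∈ S)
  have he_mem : ∀ n, e n ∈ S := Nat.nth_mem_of_infinite hS
  have he_mono : StrictMono e := Nat.nth_strictMono hS
  have hfin : ∀ m, {n | f (e n) ≤ f (e m)}.Finite := fun m =>
    ((hf _ (he_mem m)).preimage he_mono.injective.injOn).subset fun n hn => ⟨he_mem n, hn⟩
  obtain ⟨g, hg⟩ := exists_strictMono_subseq_of_finite_le (f ∘ e) hfin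
  have hmono : StrictMono (e ∘ g) := he_mono.comp g.strictMono
  refine ⟨Set.range (e ∘ g), Set.range_subset_iff.mpr fun k => he_mem _,
    Set.infinite_range_of_injective hmono.injective, ?_⟩
  rintro _ ⟨m, rfl⟩ _ ⟨n, rfl⟩ hle
  exact hg.monotone (hmono.le_iff_le.mp hle)

/-- Every infinite ascending chain S for a linear order ≤_L on ω contains an
infinite subset S' that is an ascending sequence for ≤_L. -/
theorem ascending_chain_contains_ascending_sequence (L : LinearOrder ℕ)
    (S : Set ℕ) (hS : S.Infinite)
    (hchain : ∀ x ∈ S, {y ∈ S | L.le y x}.Finite) :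
    ∃ S' ⊆ S, S'.Infinite ∧ ∀ x ∈ S', ∀ y ∈ S', x ≤ y → L.le x y :=
  @Set.Infinite.exists_infinite_subset_monotoneOn ℕ L S hS id hchain
end

section
/- If X is an infinite subset of ω and the linear order ≤_L has no infinite descending chain contained in X, then ≤_L has an infinite ascending sequence contained in X. -/
/-! By infinite Ramsey for pairs, the increasing enumeration of `X` has a subsequence that is
either `≤_L`-increasing or has no `≤_L`-increasing pair. In the second case each term lies
`≤_L`-below only earlier terms, so the range is an infinite descending chain inside `X`. -/

open Set

theorem range_ascending_of_pairwise_lt {α : Type*} [LinearOrder α] {r : α → α → Prop}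
    [Std.Refl r] {f : ℕ → α} (hf : StrictMono f) (hr : ∀ m n, m < n → r (f m) (f n)) :
    ∀ x ∈ range f, ∀ y ∈ range f, x ≤ y → r x y := by
  rintro _ ⟨m, rfl⟩ _ ⟨n, rfl⟩ hmn
  rcases (hf.le_iff_le.1 hmn).lt_or_eq with hlt | rfl
  · exact hr m n hlt
  · exact refl _

theorem finite_setOf_range_of_pairwise_not {α : Type*} {r : α → α → Prop} {f : ℕ → α}
    (hr : ∀ m n, m < n → ¬ r (f m) (f n)) :
    ∀ x ∈ range f, {y ∈ range f | r x y}.Finite := by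
  rintro _ ⟨m, rfl⟩
  refine ((finite_Iic m).image f).subset ?_
  rintro _ ⟨⟨n, rfl⟩, hmn⟩
  exact ⟨n, not_lt.1 fun h => hr m n h hmn, rfl⟩

theorem exists_ascending_of_not_exists_descending {r : ℕ → ℕ → Prop} [IsTrans ℕ r] [Std.Refl r]
    {X : Set ℕ} (hX : X.Infinite)
    (h : ¬ ∃ S ⊆ X, S.Infinite ∧ ∀ x ∈ S, {y ∈ S | r x y}.Finite) :
    ∃ S ⊆ X, S.Infinite ∧ ∀ x ∈ S, ∀ y ∈ S, x ≤ y → r x y := by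
  obtain ⟨g, hg⟩ := exists_increasing_or_nonincreasing_subseq r (Nat.nth (· ∈ X))
  set f := Nat.nth (· ∈ X) ∘ g
  have hf : StrictMono f := (Nat.nth_strictMono hX).comp g.strictMono
  have hfX : range f ⊆ X := range_subset_iff.2 fun n => Nat.nth_mem_of_infinite hX (g n)
  have hf_inf : (range f).Infinite := infinite_range_of_injective hf.injective
  rcases hg with hasc | hdesc
  · exact ⟨range f, hfX, hf_inf, range_ascending_of_pairwise_lt hf hasc⟩
  · exact (h ⟨range f, hfX, hf_inf, finite_setOf_range_of_pairwise_not hdesc⟩).elim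

/-- If X is an infinite subset of ω and the linear order ≤_L has no infinite
descending chain contained in X, then ≤_L has an infinite ascending sequence
contained in X. -/
theorem no_descending_chain_gives_ascending_sequence (L : LinearOrder ℕ)
    (X : Set ℕ) (hX : X.Infinite)
    (h : ¬ ∃ S ⊆ X, S.Infinite ∧ ∀ x ∈ S, {y ∈ S | L.le x y}.Finite) :
    ∃ S ⊆ X, S.Infinite ∧ ∀ x ∈ S, ∀ y ∈ S, x ≤ y → L.le x y :=
  exists_ascending_of_not_exists_descending hX h
end

section
/- A stable linear order on ω with infinitely many small elements and infinitely many large elements has order type ω + ω*: the small elements under ≤_L form a suborder isomorphic to ω, and the large elements form a suborder isomorphic to ω* (the reverse of ω). -/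
/-!
The rank `#{y | y < x}` of an element with finitely many predecessors is strictly increasing on
such elements, and the ranks occurring below `x` are exactly `0, …, rank x - 1`. So when there are
infinitely many such elements the rank is a bijection from them onto `ℕ`, and its inverse
enumerates them increasingly. Large elements are the small elements of the reversed order.
-/

open Set

section FiniteInitialSegments

variable {α : Type*} [LinearOrder α]

lemma ncard_Iio_lt_ncard_Iio {x y : α} (hy : (Iio y).Finite) (hxy : x < y) :
    (Iio x).ncard < (Iio y).ncard :=
  ncard_lt_ncard (Iio_ssubset_Iio hxy) hy

lemma strictMonoOn_ncard_Iio :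
    StrictMonoOn (fun x : α ↦ (Iio x).ncard) {x | (Iio x).Finite} :=
  fun _ _ _ hy hxy ↦ ncard_Iio_lt_ncard_Iio hy hxy

lemma Iio_subset_setOf_finite_Iio {x : α} (hx : (Iio x).Finite) :
    Iio x ⊆ {y | (Iio y).Finite} :=
  fun _ hy ↦ hx.subset (Iio_subset_Iio (le_of_lt hy))

lemma image_ncard_Iio_Iio {x : α} (hx : (Iio x).Finite) :
    (fun y ↦ (Iio y).ncard) '' Iio x = Iio (Iio x).ncard := by
  have hinj : InjOn (fun y ↦ (Iio y).ncard) (Iio x) :=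
    (strictMonoOn_ncard_Iio.mono (Iio_subset_setOf_finite_Iio hx)).injOn
  refine eq_of_subset_of_ncard_le ?_ ?_ (finite_Iio _)
  · rintro _ ⟨y, hy, rfl⟩
    exact ncard_Iio_lt_ncard_Iio hx hy
  · rw [hinj.ncard_image, ncard_Iio_nat]

lemma surjOn_ncard_Iio (h : {x : α | (Iio x).Finite}.Infinite) :
    SurjOn (fun x ↦ (Iio x).ncard) {x : α | (Iio x).Finite} univ := by
  intro n _
  have hinf := (infinite_image_iff strictMonoOn_ncard_Iio.injOn).2 h
  obtain ⟨_, ⟨x, hx, rfl⟩, hnx⟩ := hinf.exists_gt n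
  rw [← mem_Iio, ← image_ncard_Iio_Iio hx] at hnx
  obtain ⟨y, hyx, rfl⟩ := hnx
  exact ⟨y, Iio_subset_setOf_finite_Iio hx hyx, rfl⟩

theorem exists_strictMono_range_eq_setOf_finite_Iio (h : {x : α | (Iio x).Finite}.Infinite) :
    ∃ f : ℕ → α, StrictMono f ∧ range f = {x | (Iio x).Finite} := by
  choose f hfS hrank using fun n ↦ surjOn_ncard_Iio h (mem_univ n)
  refine ⟨f, fun m n hmn ↦ ?_, ?_⟩
  · exact (strictMonoOn_ncard_Iio.lt_iff_lt (hfS m) (hfS n)).1 (by simpa only [hrank] using hmn)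
  · refine Subset.antisymm (range_subset_iff.2 hfS) fun x hx ↦ ⟨(Iio x).ncard, ?_⟩
    exact strictMonoOn_ncard_Iio.injOn (hfS _) hx (hrank _)

theorem exists_strictAnti_range_eq_setOf_finite_Ioi (h : {x : α | (Ioi x).Finite}.Infinite) :
    ∃ g : ℕ → α, StrictAnti g ∧ range g = {x | (Ioi x).Finite} :=
  exists_strictMono_range_eq_setOf_finite_Iio (α := αᵒᵈ) h

end FiniteInitialSegments

theorem stable_order_type_omega_plus_omega_star_general (L : LinearOrder ℕ)
    (hsmall : {x : ℕ | {y | L.lt y x}.Finite}.Infinite)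
    (hlarge : {x : ℕ | {y | L.lt x y}.Finite}.Infinite) :
    (∃ f : ℕ → ℕ, Set.range f = {x : ℕ | {y | L.lt y x}.Finite} ∧
      ∀ m n : ℕ, m < n → L.lt (f m) (f n)) ∧
    (∃ g : ℕ → ℕ, Set.range g = {x : ℕ | {y | L.lt x y}.Finite} ∧
      ∀ m n : ℕ, m < n → L.lt (g n) (g m)) := by
  obtain ⟨f, hf, hfrange⟩ := @exists_strictMono_range_eq_setOf_finite_Iio ℕ L hsmall
  obtain ⟨g, hg, hgrange⟩ := @exists_strictAnti_range_eq_setOf_finite_Ioi ℕ L hlarge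
  exact ⟨⟨f, hfrange, fun _ _ ↦ @hf _ _⟩, ⟨g, hgrange, fun _ _ ↦ @hg _ _⟩⟩

/-- A stable linear order on ω with infinitely many small and infinitely many
large elements has type ω + ω*: the small elements form a suborder isomorphic
to ω and the large elements a suborder isomorphic to ω*. -/
theorem stable_order_type_omega_plus_omega_star (L : LinearOrder ℕ)
    (hstable : ∀ x : ℕ, {y | L.lt y x}.Finite ∨ {y | L.lt x y}.Finite)
    (hsmall : {x : ℕ | {y | L.lt y x}.Finite}.Infinite)
    (hlarge : {x : ℕ | {y | L.lt x y}.Finite}.Infinite) :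
    (∃ f : ℕ → ℕ, Set.range f = {x : ℕ | {y | L.lt y x}.Finite} ∧
      ∀ m n : ℕ, m < n → L.lt (f m) (f n)) ∧
    (∃ g : ℕ → ℕ, Set.range g = {x : ℕ | {y | L.lt x y}.Finite} ∧
      ∀ m n : ℕ, m < n → L.lt (g n) (g m)) :=
  stable_order_type_omega_plus_omega_star_general L hsmall hlarge
end

section
/- Every infinite limit homogeneous set for a stable 2-coloring of pairs contains an infinite homogeneous subset with the same color. -/
/-!
Choose the elements one at a time: having picked `x₀ < ⋯ < xₙ`, the next element is taken beyond all
the thresholds past which `c xᵢ · = j`, which is possible because only finitely many thresholds are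
involved and `L` is unbounded.
-/

open Filter

theorem exists_strictMono_forall_lt_of_eventually {P : ℕ → ℕ → Prop}
    (h : ∀ n, ∀ᶠ k in atTop, P n k) :
    ∃ φ : ℕ → ℕ, StrictMono φ ∧ ∀ i k, i < k → P (φ i) (φ k) := by
  have hnext : ∀ n, ∀ᶠ k in atTop, n < k ∧ ∀ m ≤ n, P m k := fun n =>
    (eventually_gt_atTop n).and ((eventually_all_finite (Set.finite_Iic n)).2 fun m _ => h m)
  choose next hnext using fun n => (hnext n).exists
  have hsucc : ∀ n, next^[n + 1] 0 = next (next^[n] 0) := fun n =>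
    Function.iterate_succ_apply' next n 0
  have hmono : StrictMono fun n => next^[n] 0 :=
    strictMono_nat_of_lt_succ fun n => hsucc n ▸ (hnext _).1
  refine ⟨fun n => next^[n] 0, hmono, fun i k hik => ?_⟩
  obtain ⟨k, rfl⟩ := Nat.exists_eq_add_of_lt hik
  show P (next^[i] 0) (next^[i + k + 1] 0)
  rw [hsucc]
  exact (hnext _).2 _ (hmono.monotone (Nat.le_add_right i k))

theorem Set.Infinite.exists_subset_forall_lt_of_eventually {L : Set ℕ} (hL : L.Infinite)
    {P : ℕ → ℕ → Prop} (h : ∀ x ∈ L, ∀ᶠ y in atTop, P x y) :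
    ∃ H ⊆ L, H.Infinite ∧ ∀ x ∈ H, ∀ y ∈ H, x < y → P x y := by
  have he := Nat.nth_strictMono hL
  have hmem : ∀ n, Nat.nth (· ∈ L) n ∈ L := Nat.nth_mem_of_infinite hL
  obtain ⟨φ, hφ, hP⟩ := exists_strictMono_forall_lt_of_eventually
    (P := fun i k => P (Nat.nth (· ∈ L) i) (Nat.nth (· ∈ L) k))
    fun i => he.tendsto_atTop.eventually (h _ (hmem i))
  refine ⟨Set.range (Nat.nth (· ∈ L) ∘ φ), Set.range_subset_iff.2 fun n => hmem (φ n),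
    Set.infinite_range_of_injective (he.comp hφ).injective, ?_⟩
  rintro _ ⟨i, rfl⟩ _ ⟨k, rfl⟩ hik
  exact hP i k ((he.comp hφ).lt_iff_lt.1 hik)

theorem limit_homogeneous_contains_homogeneous_general (c : ℕ → ℕ → Fin 2)
    (L : Set ℕ) (hL : L.Infinite) (j : Fin 2)
    (hlim : ∀ x ∈ L, ∃ N : ℕ, ∀ y, N ≤ y → x < y → c x y = j) :
    ∃ H ⊆ L, H.Infinite ∧ ∀ x ∈ H, ∀ y ∈ H, x < y → c x y = j := by
  obtain ⟨H, hHL, hH, hhom⟩ := hL.exists_subset_forall_lt_of_eventually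
    (P := fun x y => x < y → c x y = j) fun x hx => eventually_atTop.2 (hlim x hx)
  exact ⟨H, hHL, hH, fun x hx y hy hxy => hhom x hx y hy hxy hxy⟩

/-- Every infinite limit homogeneous set for a stable 2-coloring of pairs
contains an infinite homogeneous subset with the same color. -/
theorem limit_homogeneous_contains_homogeneous (c : ℕ → ℕ → Fin 2)
    (hstable : ∀ x : ℕ, ∃ j : Fin 2, ∃ N : ℕ, ∀ y, N ≤ y → x < y → c x y = j)
    (L : Set ℕ) (hL : L.Infinite) (j : Fin 2)
    (hlim : ∀ x ∈ L, ∃ N : ℕ, ∀ y, N ≤ y → x < y → c x y = j) :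
    ∃ H ⊆ L, H.Infinite ∧ ∀ x ∈ H, ∀ y ∈ H, x < y → c x y = j :=
  limit_homogeneous_contains_homogeneous_general c L hL j hlim
end
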